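/- Let G be the group of a Wirtinger presentation on n generators with s relators, given by maps a, b : Fin s → Fin n and words w : Fin s → FreeGroup (Fin n), and suppose that every connected component of the associated graph Γ has Euler characteristic 0 or 1. Then there exist a natural number m, a permutation σ of Fin m, a map t : Fin m → Fin m, and signs ε : Fin m → ℤ with ε q = 1 or ε q = −1 for all q, such that G is isomorphic to the presented group with generators x_i (i : Fin m) and the m relators (FreeGroup.of (σ q))⁻¹ * (FreeGroup.of (t q))^(−ε q) * (FreeGroup.of q) * (FreeGroup.of (t q))^(ε q) for q : Fin m; that is, G admits a Wirtinger presentation with equally many generators and relators in which every conjugating word is a single generator raised to the power ±1. -/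

import Mathlib

/-- The relator set of a Wirtinger presentation on `n` generators with `s` relators. -/
def wirtingerRels (n s : ℕ) (a b : Fin s → Fin n) (w : Fin s → FreeGroup (Fin n)) :
    Set (FreeGroup (Fin n)) :=
  { r | ∃ q : Fin s,
      r = (FreeGroup.of (a q))⁻¹ * (w q)⁻¹ * FreeGroup.of (b q) * w q }

/-- The edge relation of the graph Γ associated to a Wirtinger presentation. -/
def wirtingerEdge (n s : ℕ) (a b : Fin s → Fin n) (i j : Fin n) : Prop :=
  ∃ q : Fin s, a q = i ∧ b q = j

/-- The relator set of a Gauss-diagram-type Wirtinger presentation: `m` generators,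
`m` relators, relator `q` saying that generator `q` is conjugate to generator `σ q`
by the single generator `t q` raised to the power `ε q = ±1`. -/
def gaussRels (m : ℕ) (σ : Equiv.Perm (Fin m)) (t : Fin m → Fin m) (ε : Fin m → ℤ) :
    Set (FreeGroup (Fin m)) :=
  { r | ∃ q : Fin m,
      r = (FreeGroup.of (σ q))⁻¹ * (FreeGroup.of (t q)) ^ (-ε q) *
        FreeGroup.of q * (FreeGroup.of (t q)) ^ (ε q) }


theorem PresentedGroup.mk_eq_one {α} {rels : Set (FreeGroup α)} {x : FreeGroup α}
    (h : x ∈ Subgroup.normalClosure rels) : PresentedGroup.mk rels x = 1 :=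
  (QuotientGroup.eq_one_iff _).2 h

theorem PresentedGroup.mk_rel_eq_one {α} {rels : Set (FreeGroup α)} {x : FreeGroup α}
    (h : x ∈ rels) : PresentedGroup.mk rels x = 1 :=
  PresentedGroup.mk_eq_one (Subgroup.subset_normalClosure h)

noncomputable def tietze {α β : Type*} {R : Set (FreeGroup α)} {S : Set (FreeGroup β)}
    (φ : FreeGroup α →* FreeGroup β) (ψ : FreeGroup β →* FreeGroup α)
    (h1 : ∀ r ∈ R, PresentedGroup.mk S (φ r) = 1)
    (h2 : ∀ r ∈ S, PresentedGroup.mk R (ψ r) = 1)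
    (h3 : ∀ x : α, PresentedGroup.mk R (ψ (φ (FreeGroup.of x))) = PresentedGroup.of x)
    (h4 : ∀ x : β, PresentedGroup.mk S (φ (ψ (FreeGroup.of x))) = PresentedGroup.of x) :
    PresentedGroup R ≃* PresentedGroup S := by
  have hf : ∀ r ∈ R, FreeGroup.lift (fun a => PresentedGroup.mk S (φ (FreeGroup.of a))) r = 1 := by
    have : FreeGroup.lift (fun a => PresentedGroup.mk S (φ (FreeGroup.of a)))
        = (PresentedGroup.mk S).comp φ := by
      apply FreeGroup.ext_hom; intro a; simp
    rw [this]; exact h1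
  have hg : ∀ r ∈ S, FreeGroup.lift (fun b => PresentedGroup.mk R (ψ (FreeGroup.of b))) r = 1 := by
    have : FreeGroup.lift (fun b => PresentedGroup.mk R (ψ (FreeGroup.of b)))
        = (PresentedGroup.mk R).comp ψ := by
      apply FreeGroup.ext_hom; intro a; simp
    rw [this]; exact h2
  set Φ := PresentedGroup.toGroup hf with hΦ
  set Ψ := PresentedGroup.toGroup hg with hΨ
  have hΦmk : ∀ x, Φ (PresentedGroup.mk R x) = PresentedGroup.mk S (φ x) := by
    intro x
    have : Φ.comp (PresentedGroup.mk R) = (PresentedGroup.mk S).comp φ := by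
      apply FreeGroup.ext_hom; intro a
      show PresentedGroup.toGroup hf (PresentedGroup.of a) = _
      rw [PresentedGroup.toGroup.of]; simp
    exact congrArg (fun f => f x) (congrArg DFunLike.coe this)
  have hΨmk : ∀ x, Ψ (PresentedGroup.mk S x) = PresentedGroup.mk R (ψ x) := by
    intro x
    have : Ψ.comp (PresentedGroup.mk S) = (PresentedGroup.mk R).comp ψ := by
      apply FreeGroup.ext_hom; intro a
      show PresentedGroup.toGroup hg (PresentedGroup.of a) = _
      rw [PresentedGroup.toGroup.of]; simp
    exact congrArg (fun f => f x) (congrArg DFunLike.coe this)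
  refine MonoidHom.toMulEquiv Φ Ψ ?_ ?_
  · apply PresentedGroup.ext; intro x
    have : Φ (PresentedGroup.of x) = PresentedGroup.mk S (φ (FreeGroup.of x)) := by
      exact hΦmk _
    simp only [MonoidHom.comp_apply, this, hΨmk, h3, MonoidHom.id_apply]
  · apply PresentedGroup.ext; intro x
    have : Ψ (PresentedGroup.of x) = PresentedGroup.mk R (ψ (FreeGroup.of x)) := by
      exact hΨmk _
    simp only [MonoidHom.comp_apply, this, hΦmk, h4, MonoidHom.id_apply]

open Classical

section Comb
variable {n s : ℕ} (a b : Fin s → Fin n) (w : Fin s → FreeGroup (Fin n))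

def wirtingerEdge' (i j : Fin n) : Prop := ∃ q : Fin s, a q = i ∧ b q = j

def grel (u v : Fin n) : Prop := Relation.EqvGen (wirtingerEdge' a b) u v

lemma grel_refl (v : Fin n) : grel a b v v := Relation.EqvGen.refl v
lemma grel_symm {u v : Fin n} (h : grel a b u v) : grel a b v u := Relation.EqvGen.symm _ _ h
lemma grel_trans {u v x : Fin n} (h : grel a b u v) (h' : grel a b v x) : grel a b u x :=
  Relation.EqvGen.trans _ _ _ h h'

def gadj (u v : Fin n) : Prop := ∃ q, (a q = u ∧ b q = v) ∨ (a q = v ∧ b q = u)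

lemma gadj_symm {u v : Fin n} (h : gadj a b u v) : gadj a b v u := by
  obtain ⟨q, h⟩ := h; exact ⟨q, h.symm⟩

lemma gadj_grel {u v : Fin n} (h : gadj a b u v) : grel a b u v := by
  obtain ⟨q, h | h⟩ := h
  · exact Relation.EqvGen.rel _ _ ⟨q, h⟩
  · exact grel_symm a b (Relation.EqvGen.rel _ _ ⟨q, h⟩)

def gsteps : ℕ → Fin n → Fin n → Prop
  | 0, u, v => u = v
  | (k+1), u, v => ∃ x, gsteps k u x ∧ gadj a b x v

lemma gsteps_append {u v x : Fin n} {j k : ℕ} (h : gsteps a b j u x) (h' : gsteps a b k x v) :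
    gsteps a b (j + k) u v := by
  induction k generalizing v with
  | zero => cases h'; exact h
  | succ k ih => obtain ⟨y, hy, hadj⟩ := h'; exact ⟨y, ih hy, hadj⟩

lemma gsteps_symm {u v : Fin n} {k : ℕ} (h : gsteps a b k u v) : gsteps a b k v u := by
  induction k generalizing v with
  | zero => cases h; rfl
  | succ k ih =>
    obtain ⟨y, hy, hadj⟩ := h
    have h1 : gsteps a b 1 v y := ⟨v, rfl, gadj_symm a b hadj⟩
    have := gsteps_append a b h1 (ih hy)
    rwa [Nat.add_comm] at this

lemma grel_gsteps {u v : Fin n} (h : grel a b u v) : ∃ k, gsteps a b k u v := by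
  induction h with
  | rel x y hxy => exact ⟨1, x, rfl, ⟨hxy.choose, Or.inl hxy.choose_spec⟩⟩
  | refl x => exact ⟨0, rfl⟩
  | symm x y _ ih => exact ⟨ih.choose, gsteps_symm a b ih.choose_spec⟩
  | trans x y z _ _ ih ih' =>
    exact ⟨ih.choose + ih'.choose, gsteps_append a b ih.choose_spec ih'.choose_spec⟩

noncomputable def cls (v : Fin n) : Finset (Fin n) := Finset.univ.filter (grel a b v)

noncomputable def lst (v : Fin n) : List (Fin n) := (cls a b v).sort (· ≤ ·)

lemma mem_lst_iff {u v : Fin n} : u ∈ lst a b v ↔ grel a b v u := by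
  simp [lst, cls, Finset.mem_sort]

lemma mem_lst_self (v : Fin n) : v ∈ lst a b v := (mem_lst_iff a b).2 (grel_refl a b v)

lemma lst_ne_nil (v : Fin n) : lst a b v ≠ [] :=
  List.ne_nil_of_mem (mem_lst_self a b v)

lemma lst_nodup (v : Fin n) : (lst a b v).Nodup := (cls a b v).sort_nodup _

lemma lst_congr {u v : Fin n} (h : grel a b u v) : lst a b u = lst a b v := by
  unfold lst cls
  congr 1
  ext x
  simp only [Finset.mem_filter, Finset.mem_univ, true_and]
  exact ⟨fun h' => grel_trans a b (grel_symm a b h) h', fun h' => grel_trans a b h h'⟩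

noncomputable def grt (v : Fin n) : Fin n := (lst a b v).getD 0 v

lemma grt_mem (v : Fin n) : grt a b v ∈ lst a b v := by
  unfold grt
  rw [List.getD_eq_getElem _ _ (by
    exact List.length_pos_iff.2 (lst_ne_nil a b v))]
  exact List.getElem_mem _

lemma grel_grt (v : Fin n) : grel a b v (grt a b v) := (mem_lst_iff a b).1 (grt_mem a b v)

lemma grt_congr {u v : Fin n} (h : grel a b u v) : grt a b u = grt a b v := by
  unfold grt
  rw [lst_congr a b h]
  rcases (lst a b v).eq_nil_or_concat with h' | _
  · exact absurd h' (lst_ne_nil a b v)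
  · rcases hl : lst a b v with _ | ⟨x, t⟩
    · exact absurd hl (lst_ne_nil a b v)
    · rfl

lemma grt_grt (v : Fin n) : grt a b (grt a b v) = grt a b v :=
  (grt_congr a b (grel_symm a b (grel_grt a b v)))

end Comb

section Comb2
variable {n s : ℕ} (a b : Fin s → Fin n) (w : Fin s → FreeGroup (Fin n))

noncomputable def pos (v : Fin n) : ℕ := (lst a b v).idxOf v

noncomputable def len (v : Fin n) : ℕ := (lst a b v).length

lemma pos_lt (v : Fin n) : pos a b v < len a b v :=
  List.idxOf_lt_length_iff.2 (mem_lst_self a b v)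

lemma getElem_pos (v : Fin n) : (lst a b v)[pos a b v]'(pos_lt a b v) = v :=
  List.getElem_idxOf _

lemma grel_getElem (v : Fin n) (k : ℕ) (h : k < len a b v) :
    grel a b v ((lst a b v)[k]'(h)) :=
  (mem_lst_iff a b).1 (List.getElem_mem _)

lemma pos_getElem (v : Fin n) (k : ℕ) (h : k < len a b v) :
    pos a b ((lst a b v)[k]'(h)) = k := by
  unfold pos
  rw [lst_congr a b (grel_symm a b (grel_getElem a b v k h))]
  exact (lst_nodup a b v).idxOf_getElem k h

lemma len_congr {u v : Fin n} (h : grel a b u v) : len a b u = len a b v := by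
  unfold len; rw [lst_congr a b h]

lemma grt_eq_getElem_zero (v : Fin n) :
    grt a b v = (lst a b v)[0]'(List.length_pos_iff.2 (lst_ne_nil a b v)) := by
  unfold grt
  rw [List.getD_eq_getElem _ _ (List.length_pos_iff.2 (lst_ne_nil a b v))]

lemma pos_grt (v : Fin n) : pos a b (grt a b v) = 0 := by
  rw [grt_eq_getElem_zero a b v]
  exact pos_getElem a b v 0 _

lemma eq_grt_of_pos_eq_zero {v : Fin n} (h : pos a b v = 0) : v = grt a b v := by
  have := getElem_pos a b v
  rw [grt_eq_getElem_zero]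
  conv_lhs => rw [← this]
  simp only [h]

lemma exists_gsteps_grt (v : Fin n) : ∃ k, gsteps a b k (grt a b v) v :=
  grel_gsteps a b (grel_symm a b (grel_grt a b v))

noncomputable def dist (v : Fin n) : ℕ := Nat.find (exists_gsteps_grt a b v)

lemma par_exists (v : Fin n) (h : ¬ v = grt a b v) :
    ∃ p : Fin s × Fin n, dist a b p.2 < dist a b v ∧ grel a b p.2 v ∧
      ((a p.1 = v ∧ b p.1 = p.2) ∨ (a p.1 = p.2 ∧ b p.1 = v)) := by
  have hspec : gsteps a b (dist a b v) (grt a b v) v := Nat.find_spec (exists_gsteps_grt a b v)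
  rcases hd : dist a b v with _ | k
  · rw [hd] at hspec
    exact absurd hspec.symm h
  · rw [hd] at hspec
    obtain ⟨x, hx, hadj⟩ := hspec
    have hrel : grel a b x v := gadj_grel a b hadj
    have hgx : grt a b x = grt a b v := grt_congr a b hrel
    have hdx : dist a b x ≤ k := by
      apply Nat.find_min'
      rw [hgx]; exact hx
    obtain ⟨q, hq | hq⟩ := hadj
    · exact ⟨(q, x), by show dist a b x < k + 1; omega, hrel, Or.inr ⟨hq.1, hq.2⟩⟩
    · exact ⟨(q, x), by show dist a b x < k + 1; omega, hrel, Or.inl ⟨hq.1, hq.2⟩⟩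

noncomputable def parP (v : Fin n) (h : ¬ v = grt a b v) : Fin s × Fin n :=
  Classical.choose (par_exists a b v h)

lemma parP_spec (v : Fin n) (h : ¬ v = grt a b v) :
    dist a b (parP a b v h).2 < dist a b v ∧ grel a b (parP a b v h).2 v ∧
      ((a (parP a b v h).1 = v ∧ b (parP a b v h).1 = (parP a b v h).2) ∨
       (a (parP a b v h).1 = (parP a b v h).2 ∧ b (parP a b v h).1 = v)) :=
  Classical.choose_spec (par_exists a b v h)

noncomputable def gw (v : Fin n) : FreeGroup (Fin n) :=
  if h : v = grt a b v then 1
  else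
    gw (parP a b v h).2 *
      (if a (parP a b v h).1 = v then w (parP a b v h).1 else (w (parP a b v h).1)⁻¹)
termination_by dist a b v
decreasing_by exact (parP_spec a b v h).1

lemma gw_grt (v : Fin n) (h : v = grt a b v) : gw a b w v = 1 := by
  rw [gw]; rw [dif_pos h]

lemma parP_ne (v : Fin n) (h : ¬ v = grt a b v) : (parP a b v h).2 ≠ v := by
  intro he
  have := (parP_spec a b v h).1
  rw [he] at this
  omega

lemma gw_spec (v : Fin n) (h : ¬ v = grt a b v) :
    (a (parP a b v h).1 = v ∧ b (parP a b v h).1 = (parP a b v h).2 ∧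
      gw a b w v = gw a b w (parP a b v h).2 * w (parP a b v h).1) ∨
    (a (parP a b v h).1 = (parP a b v h).2 ∧ b (parP a b v h).1 = v ∧
      gw a b w v = gw a b w (parP a b v h).2 * (w (parP a b v h).1)⁻¹) := by
  have hs := (parP_spec a b v h).2.2
  have hne := parP_ne a b v h
  rcases hs with ⟨h1, h2⟩ | ⟨h1, h2⟩
  · left
    refine ⟨h1, h2, ?_⟩
    rw [gw]
    rw [dif_neg h, if_pos h1]
  · right
    refine ⟨h1, h2, ?_⟩
    have hav : ¬ (a (parP a b v h).1 = v) := by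
      intro hav; rw [hav] at h1; exact hne h1.symm
    rw [gw]
    rw [dif_neg h, if_neg hav]

end Comb2

def wirtingerRels' {n s : ℕ} (a b : Fin s → Fin n) (w : Fin s → FreeGroup (Fin n)) :
    Set (FreeGroup (Fin n)) :=
  { r | ∃ q : Fin s,
      r = (FreeGroup.of (a q))⁻¹ * (w q)⁻¹ * FreeGroup.of (b q) * w q }

theorem PresentedGroup.mk_eq_one' {α} {rels : Set (FreeGroup α)} {x : FreeGroup α}
    (h : x ∈ rels) : PresentedGroup.mk rels x = 1 :=
  (QuotientGroup.eq_one_iff _).2 (Subgroup.subset_normalClosure h)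

lemma comm_of_mem_closure {α : Type*} {G : Type*} [Group G] (f : FreeGroup α →* G) (x : G)
    {T : Set (FreeGroup α)} (hT : ∀ t ∈ T, Commute x (f t)) {y} (hy : y ∈ Subgroup.closure T) :
    Commute x (f y) := by
  have hle : Subgroup.closure T ≤ (Subgroup.centralizer {x}).comap f := by
    rw [Subgroup.closure_le]
    intro t ht
    simp only [Set.mem_preimage, SetLike.mem_coe, Subgroup.mem_comap]
    rw [Subgroup.mem_centralizer_iff]
    rintro y ⟨rfl⟩
    exact (hT t ht).eq
  have hm := hle hy
  rw [Subgroup.mem_comap, Subgroup.mem_centralizer_iff] at hm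
  have h2 := hm x rfl
  unfold Commute SemiconjBy
  exact h2

section Alg
variable {n s : ℕ} (a b : Fin s → Fin n) (w : Fin s → FreeGroup (Fin n))

local notation "R" => wirtingerRels' a b w
local notation "MR" => PresentedGroup.mk (wirtingerRels' a b w)
local notation "X" => fun (v : Fin n) => (PresentedGroup.of (rels := wirtingerRels' a b w) v)

lemma relF (q : Fin s) : X (a q) = (MR (w q))⁻¹ * X (b q) * MR (w q) := by
  have h1 : MR ((FreeGroup.of (a q))⁻¹ * (w q)⁻¹ * FreeGroup.of (b q) * w q) = 1 :=
    PresentedGroup.mk_eq_one' ⟨q, rfl⟩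
  simp only [map_mul, map_inv] at h1
  have h1' : (MR (FreeGroup.of (a q)))⁻¹ *
      ((MR (w q))⁻¹ * MR (FreeGroup.of (b q)) * MR (w q)) = 1 := by
    rw [← h1]; group
  exact inv_mul_eq_one.1 h1'

lemma grel_ab (q : Fin s) : grel a b (a q) (b q) :=
  Relation.EqvGen.rel _ _ ⟨q, rfl, rfl⟩

lemma X_eq (v : Fin n) :
    X v = (MR (gw a b w v))⁻¹ * X (grt a b v) * MR (gw a b w v) := by
  suffices H : ∀ (k : ℕ) (v : Fin n), dist a b v = k →
      X v = (MR (gw a b w v))⁻¹ * X (grt a b v) * MR (gw a b w v) by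
    exact H _ v rfl
  intro k
  induction k using Nat.strong_induction_on with
  | _ k ih =>
    intro v hd
    by_cases hr : v = grt a b v
    · rw [gw_grt a b w v hr, ← hr]
      simp
    · have hgu : grt a b (parP a b v hr).2 = grt a b v :=
        grt_congr a b (parP_spec a b v hr).2.1
      have hdu : dist a b (parP a b v hr).2 < k := by
        have := (parP_spec a b v hr).1; omega
      have ihu := ih _ hdu (parP a b v hr).2 rfl
      rcases gw_spec a b w v hr with ⟨h1, h2, h3⟩ | ⟨h1, h2, h3⟩
      · have hx := relF a b w (parP a b v hr).1
        rw [h1, h2] at hx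
        rw [hx, ihu, hgu, h3]
        simp only [map_mul, map_inv]
        group
      · have hx := relF a b w (parP a b v hr).1
        rw [h1, h2] at hx
        have hx2 : (fun v => (PresentedGroup.of (rels := wirtingerRels' a b w) v)) v =
            MR (w (parP a b v hr).1) * (fun v => (PresentedGroup.of (rels := wirtingerRels' a b w) v)) (parP a b v hr).2 *
            (MR (w (parP a b v hr).1))⁻¹ := by
          rw [hx]; group
        rw [hx2, ihu, hgu, h3]
        simp only [map_mul, map_inv]
        group

def isPar (q : Fin s) : Prop := ∃ (v : Fin n) (h : ¬ v = grt a b v), (parP a b v h).1 = q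

lemma parP_inj {v1 v2 : Fin n} (h1 : ¬ v1 = grt a b v1) (h2 : ¬ v2 = grt a b v2)
    (hne : v1 ≠ v2) : (parP a b v1 h1).1 ≠ (parP a b v2 h2).1 := by
  intro he
  have s1 := parP_spec a b v1 h1
  have s2 := parP_spec a b v2 h2
  rw [he] at s1
  rcases s1.2.2 with ⟨e1, e2⟩ | ⟨e1, e2⟩ <;> rcases s2.2.2 with ⟨f1, f2⟩ | ⟨f1, f2⟩
  · exact hne (e1.symm.trans f1)
  · -- a q = v1, b q = u1 ; a q = u2, b q = v2 : v1 = u2, u1 = v2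
    have : v1 = (parP a b v2 h2).2 := e1.symm.trans f1
    have : (parP a b v1 h1).2 = v2 := e2.symm.trans f2
    have d1 := s1.1
    have d2 := s2.1
    rw [this] at d1
    rw [← ‹v1 = (parP a b v2 h2).2›] at d2
    omega
  · have : v1 = (parP a b v2 h2).2 := f2.symm.trans e2 |>.symm
    have hb : (parP a b v1 h1).2 = v2 := e1.symm.trans f1
    have d1 := s1.1
    have d2 := s2.1
    rw [hb] at d1
    rw [← this] at d2
    omega
  · exact hne (e2.symm.trans f2)

lemma np_unique {q q' : Fin s} (hq : ¬ isPar a b q) (hq' : ¬ isPar a b q')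
    (hrel : grel a b (a q) (a q'))
    (heuler : ∀ i : Fin n,
      Nat.card { p : Fin s // grel a b i (a p) } ≤ Nat.card { j : Fin n // grel a b i j }) :
    q = q' := by
  classical
  set r := grt a b (a q) with hrdef
  have hrr : r = grt a b r := (grt_grt a b (a q)).symm
  have hra : grel a b r (a q) := grel_symm a b (grel_grt a b (a q))
  have hra' : grel a b r (a q') := grel_trans a b hra hrel
  set Er : Finset (Fin s) := Finset.univ.filter (fun p => grel a b r (a p)) with hEr
  set Cr : Finset (Fin n) := Finset.univ.filter (fun j => grel a b r j) with hCr
  have hcard : Er.card ≤ Cr.card := by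
    have := heuler r
    rwa [Nat.card_eq_fintype_card, Nat.card_eq_fintype_card,
      Fintype.card_subtype, Fintype.card_subtype] at this
  -- injection from Cr.erase r into parent edges
  have hdom : ∀ v ∈ Cr.erase r, ¬ v = grt a b v := by
    intro v hv
    rw [Finset.mem_erase, hCr, Finset.mem_filter] at hv
    intro he
    apply hv.1
    rw [he, ← grt_congr a b hv.2.2, ← hrr]
  by_cases hs : s = 0
  · exact absurd q.isLt (by omega)
  have : Nonempty (Fin s) := ⟨q⟩
  set f : Fin n → Fin s := fun v =>
    if h : ¬ v = grt a b v then (parP a b v h).1 else Classical.arbitrary _ with hf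
  have hinj : Set.InjOn f (Cr.erase r) := by
    intro v1 hv1 v2 hv2 he
    by_contra hne
    have h1 := hdom v1 hv1
    have h2 := hdom v2 hv2
    rw [hf] at he
    simp only [dif_pos h1, dif_pos h2] at he
    exact parP_inj a b h1 h2 hne he
  have hmaps : ∀ v ∈ Cr.erase r, f v ∈ Er.filter (isPar a b) := by
    intro v hv
    have h1 := hdom v hv
    have hvCr : grel a b r v := by
      have := (Finset.mem_erase.1 hv).2
      rw [hCr, Finset.mem_filter] at this
      exact this.2
    rw [hf]
    simp only [dif_pos h1]
    rw [Finset.mem_filter, hEr, Finset.mem_filter]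
    have hspec := parP_spec a b v h1
    refine ⟨⟨Finset.mem_univ _, ?_⟩, ⟨v, h1, rfl⟩⟩
    rcases hspec.2.2 with ⟨e1, _⟩ | ⟨e1, _⟩
    · rw [e1]; exact hvCr
    · rw [e1]
      exact grel_trans a b hvCr (grel_symm a b hspec.2.1)
  have hle : (Cr.erase r).card ≤ (Er.filter (isPar a b)).card :=
    Finset.card_le_card_of_injOn f hmaps hinj
  have hsplit := Finset.card_filter_add_card_filter_not
    (s := Er) (p := isPar a b)
  have hrmem : r ∈ Cr := by
    rw [hCr, Finset.mem_filter]
    exact ⟨Finset.mem_univ _, grel_refl a b r⟩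
  have herase : (Cr.erase r).card = Cr.card - 1 := Finset.card_erase_of_mem hrmem
  have hCrpos : 0 < Cr.card := Finset.card_pos.2 ⟨r, hrmem⟩
  have hnp : (Er.filter (fun p => ¬ isPar a b p)).card ≤ 1 := by omega
  have hqmem : q ∈ Er.filter (fun p => ¬ isPar a b p) := by
    rw [Finset.mem_filter, hEr, Finset.mem_filter]
    exact ⟨⟨Finset.mem_univ _, hra⟩, hq⟩
  have hqmem' : q' ∈ Er.filter (fun p => ¬ isPar a b p) := by
    rw [Finset.mem_filter, hEr, Finset.mem_filter]
    exact ⟨⟨Finset.mem_univ _, hra'⟩, hq'⟩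
  exact Finset.card_le_one.1 hnp q hqmem q' hqmem'

noncomputable def hword (q : Fin s) : FreeGroup (Fin n) := gw a b w (b q) * w q * (gw a b w (a q))⁻¹

noncomputable def holE (v : Fin n) : FreeGroup (Fin n) :=
  if h : ∃ q, grel a b (grt a b v) (a q) ∧ ¬ isPar a b q then hword a b w (Classical.choose h)
  else 1

lemma holE_congr {u v : Fin n} (h : grel a b u v) : holE a b w u = holE a b w v := by
  unfold holE
  rw [grt_congr a b h]

end Alg

section Alg2
variable {n s : ℕ} (a b : Fin s → Fin n) (w : Fin s → FreeGroup (Fin n))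

local notation "MR" => PresentedGroup.mk (wirtingerRels' a b w)
local notation "X" => fun (v : Fin n) => (PresentedGroup.of (rels := wirtingerRels' a b w) v)

lemma hword_mem
    (heuler : ∀ i : Fin n,
      Nat.card { p : Fin s // grel a b i (a p) } ≤ Nat.card { j : Fin n // grel a b i j })
    (q : Fin s) :
    hword a b w q ∈
      Subgroup.closure {FreeGroup.of (grt a b (a q)), holE a b w (a q)} := by
  by_cases hp : isPar a b q
  · obtain ⟨v, hv, hpq⟩ := hp
    have hspec := gw_spec a b w v hv
    rw [hpq] at hspec
    have : hword a b w q = 1 := by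
      rcases hspec with ⟨e1, e2, e3⟩ | ⟨e1, e2, e3⟩
      · unfold hword
        rw [e1, e2, e3]
        group
      · unfold hword
        rw [e1, e2, e3]
        group
    rw [this]
    exact one_mem _
  · have hex : ∃ p, grel a b (grt a b (a q)) (a p) ∧ ¬ isPar a b p :=
      ⟨q, grel_symm a b (grel_grt a b (a q)), hp⟩
    have : holE a b w (a q) = hword a b w q := by
      unfold holE
      rw [dif_pos hex]
      congr 1
      have hspec := Classical.choose_spec hex
      exact np_unique a b hspec.2 hp
        (grel_trans a b (grel_symm a b hspec.1) (grel_symm a b (grel_grt a b (a q)))) heuler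
    rw [← this]
    exact Subgroup.subset_closure (Set.mem_insert_iff.2 (Or.inr rfl))

lemma Xr_comm (v : Fin n) :
    X (grt a b v) * MR (holE a b w v) = MR (holE a b w v) * X (grt a b v) := by
  unfold holE
  by_cases hex : ∃ q, grel a b (grt a b v) (a q) ∧ ¬ isPar a b q
  · rw [dif_pos hex]
    set q := Classical.choose hex with hq
    have hspec := Classical.choose_spec hex
    have hga : grt a b (a q) = grt a b v := by
      rw [← grt_congr a b hspec.1, grt_grt]
    have hgb : grt a b (b q) = grt a b v := by
      rw [← grt_congr a b (grel_ab a b q), hga]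
    have e1 := X_eq a b w (a q)
    have e2 := X_eq a b w (b q)
    rw [hga] at e1
    rw [hgb] at e2
    have e3 := relF a b w q
    have hw : MR (hword a b w q) =
        MR (gw a b w (b q)) * MR (w q) * (MR (gw a b w (a q)))⁻¹ := by
      unfold hword
      simp only [map_mul, map_inv]
    rw [hw]
    have e2' : X (grt a b v) =
        MR (gw a b w (b q)) * X (b q) * (MR (gw a b w (b q)))⁻¹ := by
      rw [e2]; group
    have e3' : X (b q) * MR (w q) = MR (w q) * X (a q) := by
      rw [e3]; group
    have e1' : X (a q) * (MR (gw a b w (a q)))⁻¹ =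
        (MR (gw a b w (a q)))⁻¹ * X (grt a b v) := by
      rw [e1]; group
    calc X (grt a b v) * (MR (gw a b w (b q)) * MR (w q) * (MR (gw a b w (a q)))⁻¹)
        = (MR (gw a b w (b q)) * X (b q) * (MR (gw a b w (b q)))⁻¹) *
            (MR (gw a b w (b q)) * MR (w q) * (MR (gw a b w (a q)))⁻¹) := by rw [← e2']
      _ = MR (gw a b w (b q)) * (X (b q) * MR (w q)) * (MR (gw a b w (a q)))⁻¹ := by group
      _ = MR (gw a b w (b q)) * (MR (w q) * X (a q)) * (MR (gw a b w (a q)))⁻¹ := by rw [e3']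
      _ = MR (gw a b w (b q)) * MR (w q) * (X (a q) * (MR (gw a b w (a q)))⁻¹) := by group
      _ = MR (gw a b w (b q)) * MR (w q) * ((MR (gw a b w (a q)))⁻¹ * X (grt a b v)) := by
            rw [e1']
      _ = MR (gw a b w (b q)) * MR (w q) * (MR (gw a b w (a q)))⁻¹ * X (grt a b v) := by group
  · rw [dif_neg hex]
    simp

end Alg2


lemma modarith1 {L p : ℕ} (h : p < L) : ((p + 1) % L + (L - 1)) % L = p := by
  rcases Nat.lt_or_ge (p + 1) L with h1 | h1
  · rw [Nat.mod_eq_of_lt h1]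
    have he : p + 1 + (L - 1) = p + L := by omega
    rw [he, Nat.add_mod_right, Nat.mod_eq_of_lt h]
  · have hp : p + 1 = L := by omega
    rw [hp, Nat.mod_self, Nat.zero_add, Nat.mod_eq_of_lt (show L - 1 < L by omega)]
    omega

lemma modarith2 {L p : ℕ} (h : p < L) : ((p + (L - 1)) % L + 1) % L = p := by
  rcases Nat.eq_zero_or_pos p with h1 | h1
  · subst h1
    rw [Nat.zero_add, Nat.mod_eq_of_lt (show L - 1 < L by omega)]
    have h2 : L - 1 + 1 = L := by omega
    rw [h2, Nat.mod_self]
  · have he : p + (L - 1) = (p - 1) + L := by omega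
    rw [he, Nat.add_mod_right, Nat.mod_eq_of_lt (show p - 1 < L by omega)]
    have h2 : p - 1 + 1 = p := by omega
    rw [h2, Nat.mod_eq_of_lt h]

section Pi
variable {n s : ℕ} (a b : Fin s → Fin n) (w : Fin s → FreeGroup (Fin n))

noncomputable def gidx (v : Fin n) (k : ℕ) : Fin n := (lst a b v).getD (k % len a b v) v

lemma len_pos (v : Fin n) : 0 < len a b v := List.length_pos_iff.2 (lst_ne_nil a b v)

lemma gidx_eq_getElem (v : Fin n) (k : ℕ) :
    gidx a b v k = (lst a b v)[k % len a b v]'(Nat.mod_lt _ (len_pos a b v)) := by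
  unfold gidx
  exact List.getD_eq_getElem _ _ (Nat.mod_lt _ (len_pos a b v))

lemma grel_gidx (v : Fin n) (k : ℕ) : grel a b v (gidx a b v k) := by
  rw [gidx_eq_getElem]
  exact grel_getElem a b v _ _

lemma pos_gidx (v : Fin n) (k : ℕ) : pos a b (gidx a b v k) = k % len a b v := by
  rw [gidx_eq_getElem]
  exact pos_getElem a b v _ _

lemma gidx_congr {u v : Fin n} (h : grel a b u v) (k : ℕ) : gidx a b u k = gidx a b v k := by
  have h1 : len a b u = len a b v := len_congr a b h
  rw [gidx_eq_getElem a b u k, gidx_eq_getElem a b v k]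
  grind [lst_congr a b h]

lemma gidx_mod_eq (v : Fin n) {k1 k2 : ℕ} (h : k1 % len a b v = k2 % len a b v) :
    gidx a b v k1 = gidx a b v k2 := by
  unfold gidx
  rw [h]

lemma gidx_pos_self (v : Fin n) : gidx a b v (pos a b v) = v := by
  rw [gidx_eq_getElem]
  have h2 : pos a b v % len a b v = pos a b v := Nat.mod_eq_of_lt (pos_lt a b v)
  simp only [h2]
  exact getElem_pos a b v

lemma gidx_zero (v : Fin n) : gidx a b v 0 = grt a b v := by
  rw [gidx_eq_getElem, grt_eq_getElem_zero]
  simp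

noncomputable def nxt (v : Fin n) : Fin n := gidx a b v (pos a b v + 1)

noncomputable def prv (v : Fin n) : Fin n := gidx a b v (pos a b v + (len a b v - 1))

lemma grel_nxt (v : Fin n) : grel a b v (nxt a b v) := grel_gidx a b v _

lemma grel_prv (v : Fin n) : grel a b v (prv a b v) := grel_gidx a b v _

lemma prv_nxt (v : Fin n) : prv a b (nxt a b v) = v := by
  have hg : grel a b (nxt a b v) v := grel_symm a b (grel_nxt a b v)
  unfold prv
  rw [gidx_congr a b hg, len_congr a b hg]
  unfold nxt
  rw [pos_gidx]
  have h3 : gidx a b v ((pos a b v + 1) % len a b v + (len a b v - 1)) =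
      gidx a b v (pos a b v) := by
    apply gidx_mod_eq
    rw [modarith1 (pos_lt a b v), Nat.mod_eq_of_lt (pos_lt a b v)]
  rw [h3, gidx_pos_self]

lemma nxt_prv (v : Fin n) : nxt a b (prv a b v) = v := by
  have hg : grel a b (prv a b v) v := grel_symm a b (grel_prv a b v)
  unfold nxt
  rw [gidx_congr a b hg]
  unfold prv
  rw [pos_gidx]
  have h3 : gidx a b v ((pos a b v + (len a b v - 1)) % len a b v + 1) =
      gidx a b v (pos a b v) := by
    apply gidx_mod_eq
    rw [modarith2 (pos_lt a b v), Nat.mod_eq_of_lt (pos_lt a b v)]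
  rw [h3, gidx_pos_self]

lemma nxt_last (v : Fin n) (h : pos a b v = len a b v - 1) : nxt a b v = grt a b v := by
  unfold nxt
  rw [h]
  have h1 : len a b v - 1 + 1 = len a b v := by have := len_pos a b v; omega
  rw [h1]
  have h2 : gidx a b v (len a b v) = gidx a b v 0 :=
    gidx_mod_eq a b v (by rw [Nat.mod_self, Nat.zero_mod])
  rw [h2, gidx_zero]

noncomputable def hW (v : Fin n) : FreeGroup (Fin n) :=
  (gw a b w v)⁻¹ * (if pos a b v = len a b v - 1 then holE a b w v else 1) *
    gw a b w (nxt a b v)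

lemma key_tel1 (v : Fin n) (h : ¬ pos a b v = len a b v - 1) :
    gw a b w v * hW a b w v = gw a b w (nxt a b v) := by
  unfold hW
  rw [if_neg h]
  group

lemma key_tel2 (v : Fin n) (h : pos a b v = len a b v - 1) :
    gw a b w v * hW a b w v = holE a b w v * gw a b w (nxt a b v) := by
  unfold hW
  rw [if_pos h]
  group

end Pi

section Zt
variable {n s : ℕ} (a b : Fin s → Fin n) (w : Fin s → FreeGroup (Fin n))

noncomputable def bs (v : Fin n) : ℕ := max 1 (hW a b w v).toWord.length

lemma bs_pos (v : Fin n) : 0 < bs a b w v := lt_of_lt_of_le one_pos (le_max_left _ _)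

abbrev ZT (a : Fin s → Fin n) (b : Fin s → Fin n) (w : Fin s → FreeGroup (Fin n)) : Type :=
  (v : Fin n) × Fin (bs a b w v)

noncomputable instance : Fintype (ZT a b w) := by unfold ZT; infer_instance

lemma ZT_ext {u v : Fin n} (h : u = v) {i : Fin (bs a b w u)} {j : Fin (bs a b w v)}
    (h2 : (i : ℕ) = (j : ℕ)) : (⟨u, i⟩ : ZT a b w) = ⟨v, j⟩ := by
  subst h
  exact congrArg _ (Fin.ext h2)

noncomputable def sigZ : Equiv.Perm (ZT a b w) where
  toFun z := if h : (z.2 : ℕ) + 1 < bs a b w z.1 then ⟨z.1, ⟨(z.2 : ℕ) + 1, h⟩⟩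
    else ⟨nxt a b z.1, ⟨0, bs_pos a b w _⟩⟩
  invFun z := if _ : (z.2 : ℕ) = 0 then
      ⟨prv a b z.1, ⟨bs a b w (prv a b z.1) - 1, by have := bs_pos a b w (prv a b z.1); omega⟩⟩
    else ⟨z.1, ⟨(z.2 : ℕ) - 1, by have := z.2.isLt; omega⟩⟩
  left_inv := by
    rintro ⟨v, j⟩
    dsimp only
    by_cases h : (j : ℕ) + 1 < bs a b w v
    · rw [dif_pos h]
      simp only [dif_neg (by omega : ¬ ((j : ℕ) + 1 = 0))]
      exact ZT_ext a b w rfl (by simp only [Fin.val_mk]; omega)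
    · rw [dif_neg h]
      simp only [dif_pos rfl]
      refine ZT_ext a b w (prv_nxt a b v) ?_
      simp only [Fin.val_mk]
      rw [prv_nxt a b v]
      have := j.isLt
      omega
  right_inv := by
    rintro ⟨v, j⟩
    dsimp only
    by_cases h : (j : ℕ) = 0
    · rw [dif_pos h]
      have hc : ¬ ((bs a b w (prv a b v) - 1) + 1 < bs a b w (prv a b v)) := by
        have := bs_pos a b w (prv a b v); omega
      simp only [dif_neg hc]
      exact ZT_ext a b w (nxt_prv a b v) (by simp only [Fin.val_mk]; omega)
    · rw [dif_neg h]
      have hc : ((j : ℕ) - 1) + 1 < bs a b w v := by have := j.isLt; omega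
      simp only [dif_pos hc]
      exact ZT_ext a b w rfl (by simp only [Fin.val_mk]; omega)

noncomputable def tz (z : ZT a b w) : ZT a b w :=
  if h : (z.2 : ℕ) < (hW a b w z.1).toWord.length then
    ⟨((hW a b w z.1).toWord.get ⟨(z.2 : ℕ), h⟩).1, ⟨0, bs_pos a b w _⟩⟩
  else z

noncomputable def ez (z : ZT a b w) : ℤ :=
  if h : (z.2 : ℕ) < (hW a b w z.1).toWord.length then
    (if ((hW a b w z.1).toWord.get ⟨(z.2 : ℕ), h⟩).2 then 1 else -1)
  else 1

lemma ez_pm (z : ZT a b w) : ez a b w z = 1 ∨ ez a b w z = -1 := by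
  unfold ez
  split
  · split
    · exact Or.inl rfl
    · exact Or.inr rfl
  · exact Or.inl rfl

noncomputable def pre (v : Fin n) (j : ℕ) : FreeGroup (Fin n) :=
  FreeGroup.mk ((hW a b w v).toWord.take j)

lemma pre_zero (v : Fin n) : pre a b w v 0 = 1 := by
  unfold pre
  rw [List.take_zero]
  rfl

lemma mk_single (l : Fin n × Bool) :
    FreeGroup.mk [l] = (FreeGroup.of l.1) ^ (if l.2 then (1 : ℤ) else -1) := by
  rcases l with ⟨x, bo⟩
  cases bo
  · simp only [if_neg (by simp : ¬ (false = true))]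
    rw [zpow_neg, zpow_one]
    rw [show FreeGroup.of x = FreeGroup.mk [(x, true)] from rfl, FreeGroup.inv_mk]
    simp [FreeGroup.invRev]
  · simp only [if_pos rfl, zpow_one]
    rfl

lemma pre_succ (v : Fin n) (j : ℕ) (h : j < (hW a b w v).toWord.length) :
    pre a b w v (j + 1) = pre a b w v j * FreeGroup.mk [(hW a b w v).toWord.get ⟨j, h⟩] := by
  unfold pre
  rw [FreeGroup.mul_mk]
  congr 1
  rw [List.take_succ, List.getElem?_eq_getElem h]
  rfl

lemma pre_full (v : Fin n) : pre a b w v ((hW a b w v).toWord.length) = hW a b w v := by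
  unfold pre
  rw [List.take_length, FreeGroup.mk_toWord]

end Zt

def gaussSet {Z : Type*} (σ : Equiv.Perm Z) (t : Z → Z) (ε : Z → ℤ) : Set (FreeGroup Z) :=
  { r | ∃ q : Z,
      r = (FreeGroup.of (σ q))⁻¹ * (FreeGroup.of (t q)) ^ (-ε q) *
        FreeGroup.of q * (FreeGroup.of (t q)) ^ (ε q) }

section Claims
variable {n s : ℕ} (a b : Fin s → Fin n) (w : Fin s → FreeGroup (Fin n))

local notation "SS" => gaussSet (sigZ a b w) (tz a b w) (ez a b w)
local notation "MS" => PresentedGroup.mk (gaussSet (sigZ a b w) (tz a b w) (ez a b w))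
local notation "OS" => fun (z : ZT a b w) => (PresentedGroup.of
  (rels := gaussSet (sigZ a b w) (tz a b w) (ez a b w)) z)

noncomputable def PS : FreeGroup (Fin n) →* PresentedGroup (gaussSet (sigZ a b w) (tz a b w) (ez a b w)) :=
  FreeGroup.lift (fun v => PresentedGroup.of ⟨v, ⟨0, bs_pos a b w v⟩⟩)

lemma PS_of (v : Fin n) : PS a b w (FreeGroup.of v) = OS ⟨v, ⟨0, bs_pos a b w v⟩⟩ :=
  FreeGroup.lift_apply_of

lemma relS (z : ZT a b w) :
    OS (sigZ a b w z) =
      ((OS (tz a b w z)) ^ (ez a b w z))⁻¹ * OS z * (OS (tz a b w z)) ^ (ez a b w z) := by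
  have h1 : MS ((FreeGroup.of (sigZ a b w z))⁻¹ * (FreeGroup.of (tz a b w z)) ^ (-(ez a b w z)) *
      FreeGroup.of z * (FreeGroup.of (tz a b w z)) ^ (ez a b w z)) = 1 :=
    PresentedGroup.mk_eq_one' ⟨z, rfl⟩
  simp only [map_mul, map_inv, map_zpow, zpow_neg] at h1
  have h1' : (MS (FreeGroup.of (sigZ a b w z)))⁻¹ *
      (((MS (FreeGroup.of (tz a b w z))) ^ (ez a b w z))⁻¹ * MS (FreeGroup.of z) *
        (MS (FreeGroup.of (tz a b w z))) ^ (ez a b w z)) = 1 := by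
    rw [← h1]; group
  exact inv_mul_eq_one.1 h1'

lemma osconj (z : ZT a b w) (hjL : (z.2 : ℕ) < (hW a b w z.1).toWord.length) :
    (OS (tz a b w z)) ^ (ez a b w z) =
      PS a b w (FreeGroup.mk [(hW a b w z.1).toWord.get ⟨(z.2 : ℕ), hjL⟩]) := by
  rw [mk_single, map_zpow, PS_of]
  congr 1
  · unfold tz
    rw [dif_pos hjL]
  · unfold ez
    rw [dif_pos hjL]

lemma claimA (v : Fin n) (j : ℕ) (hj : j < bs a b w v) :
    OS ⟨v, ⟨j, hj⟩⟩ = (PS a b w (pre a b w v j))⁻¹ *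
      OS ⟨v, ⟨0, bs_pos a b w v⟩⟩ * PS a b w (pre a b w v j) := by
  induction j with
  | zero =>
    rw [pre_zero, map_one]
    simp
  | succ j ih =>
    have hj' : j < bs a b w v := by omega
    have hjL : j < (hW a b w v).toWord.length := by
      have hb : bs a b w v = max 1 (hW a b w v).toWord.length := rfl
      omega
    have ihj := ih hj'
    have hsig : sigZ a b w ⟨v, ⟨j, hj'⟩⟩ = ⟨v, ⟨j + 1, hj⟩⟩ := by
      unfold sigZ
      dsimp only [Equiv.coe_fn_mk, Fin.val_mk]
      rw [dif_pos hj]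
    have hrel := relS a b w ⟨v, ⟨j, hj'⟩⟩
    rw [hsig, osconj a b w ⟨v, ⟨j, hj'⟩⟩ hjL] at hrel
    dsimp only at hrel ihj ⊢
    rw [hrel, ihj, pre_succ a b w v j hjL, map_mul]
    group

lemma hW_eq_one_of_len {v : Fin n} (hL : (hW a b w v).toWord.length = 0) : hW a b w v = 1 := by
  have h1 : (hW a b w v).toWord = [] := List.length_eq_zero_iff.1 hL
  have := FreeGroup.mk_toWord (x := hW a b w v)
  rw [h1] at this
  rw [← this]
  rfl

lemma claimA' (v : Fin n) :
    OS ⟨nxt a b v, ⟨0, bs_pos a b w _⟩⟩ = (PS a b w (hW a b w v))⁻¹ *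
      OS ⟨v, ⟨0, bs_pos a b w v⟩⟩ * PS a b w (hW a b w v) := by
  by_cases hL : (hW a b w v).toWord.length = 0
  · have h1 := hW_eq_one_of_len a b w hL
    have hbs : bs a b w v = 1 := by unfold bs; omega
    have h0 : (0 : ℕ) + 1 < bs a b w v → False := by omega
    have hsig : sigZ a b w ⟨v, ⟨0, bs_pos a b w v⟩⟩ = ⟨nxt a b v, ⟨0, bs_pos a b w _⟩⟩ := by
      unfold sigZ
      dsimp only [Equiv.coe_fn_mk, Fin.val_mk]
      rw [dif_neg h0]
    have ht : tz a b w ⟨v, ⟨0, bs_pos a b w v⟩⟩ = ⟨v, ⟨0, bs_pos a b w v⟩⟩ := by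
      unfold tz
      rw [dif_neg (by omega : ¬ ((0 : ℕ) < (hW a b w v).toWord.length))]
    have he : ez a b w ⟨v, ⟨0, bs_pos a b w v⟩⟩ = 1 := by
      unfold ez
      rw [dif_neg (by omega : ¬ ((0 : ℕ) < (hW a b w v).toWord.length))]
    have hrel := relS a b w ⟨v, ⟨0, bs_pos a b w v⟩⟩
    rw [hsig, ht, he] at hrel
    rw [hrel, h1, map_one]
    group
  · have hL1 : 1 ≤ (hW a b w v).toWord.length := by omega
    set L := (hW a b w v).toWord.length with hLdef
    have hbs : bs a b w v = L := by unfold bs; omega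
    have hj : L - 1 < bs a b w v := by omega
    have hjL : L - 1 < L := by omega
    have hnot : ¬ ((L - 1 : ℕ) + 1 < bs a b w v) := by omega
    have hsig : sigZ a b w ⟨v, ⟨L - 1, hj⟩⟩ = ⟨nxt a b v, ⟨0, bs_pos a b w _⟩⟩ := by
      unfold sigZ
      dsimp only [Equiv.coe_fn_mk, Fin.val_mk]
      rw [dif_neg hnot]
    have hrel := relS a b w ⟨v, ⟨L - 1, hj⟩⟩
    rw [hsig, osconj a b w ⟨v, ⟨L - 1, hj⟩⟩ hjL] at hrel
    dsimp only at hrel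
    have hA := claimA a b w v (L - 1) hj
    dsimp only at hA ⊢
    have hfull : pre a b w v (L - 1) *
        FreeGroup.mk [(hW a b w v).toWord.get ⟨L - 1, hjL⟩] = hW a b w v := by
      rw [← pre_succ a b w v (L - 1) hjL]
      rw [show L - 1 + 1 = L by omega]
      exact pre_full a b w v
    have hps : (PS a b w) (hW a b w v) =
        PS a b w (pre a b w v (L - 1)) *
          PS a b w (FreeGroup.mk [(hW a b w v).toWord.get ⟨L - 1, hjL⟩]) := by
      rw [← map_mul, hfull]
    rw [hrel, hA, hps]
    group

lemma claimB (v : Fin n) :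
    OS ⟨v, ⟨0, bs_pos a b w v⟩⟩ = (PS a b w (gw a b w v))⁻¹ *
      OS ⟨grt a b v, ⟨0, bs_pos a b w _⟩⟩ * PS a b w (gw a b w v) := by
  suffices H : ∀ (k : ℕ) (v : Fin n), pos a b v = k →
      OS ⟨v, ⟨0, bs_pos a b w v⟩⟩ = (PS a b w (gw a b w v))⁻¹ *
        OS ⟨grt a b v, ⟨0, bs_pos a b w _⟩⟩ * PS a b w (gw a b w v) by
    exact H _ v rfl
  intro k
  induction k with
  | zero =>
    intro v hv
    have hgrt := eq_grt_of_pos_eq_zero a b hv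
    rw [gw_grt a b w v hgrt, map_one]
    have : OS ⟨v, ⟨0, bs_pos a b w v⟩⟩ = OS ⟨grt a b v, ⟨0, bs_pos a b w _⟩⟩ :=
      congrArg (fun u => OS ⟨u, ⟨0, bs_pos a b w u⟩⟩) hgrt
    rw [this]
    group
  | succ k ih =>
    intro v hv
    have hk1 : k + 1 < len a b v := by rw [← hv]; exact pos_lt a b v
    have hku : k % len a b v = k := Nat.mod_eq_of_lt (by omega)
    have hgu : grel a b v (gidx a b v k) := grel_gidx a b v k
    have hposu : pos a b (gidx a b v k) = k := by rw [pos_gidx, hku]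
    have hnxtu : nxt a b (gidx a b v k) = v := by
      unfold nxt
      rw [hposu, gidx_congr a b (grel_symm a b hgu), ← hv, gidx_pos_self]
    have hlenu : len a b (gidx a b v k) = len a b v := len_congr a b (grel_symm a b hgu)
    have hnotlast : ¬ pos a b (gidx a b v k) = len a b (gidx a b v k) - 1 := by
      rw [hposu, hlenu]
      omega
    have ihu := ih (gidx a b v k) hposu
    have hA' := claimA' a b w (gidx a b v k)
    rw [hnxtu] at hA'
    have hgrtu : grt a b (gidx a b v k) = grt a b v := grt_congr a b (grel_symm a b hgu)
    rw [ihu] at hA'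
    have htel := key_tel1 a b w (gidx a b v k) hnotlast
    rw [hnxtu] at htel
    rw [hA', ← htel, map_mul]
    have : OS ⟨grt a b (gidx a b v k), ⟨0, bs_pos a b w _⟩⟩ =
        OS ⟨grt a b v, ⟨0, bs_pos a b w _⟩⟩ :=
      congrArg (fun u => OS ⟨u, ⟨0, bs_pos a b w u⟩⟩) hgrtu
    rw [this]
    group

lemma claimC (v : Fin n) (hv : v = grt a b v) :
    OS ⟨v, ⟨0, bs_pos a b w v⟩⟩ * PS a b w (holE a b w v) =
      PS a b w (holE a b w v) * OS ⟨v, ⟨0, bs_pos a b w v⟩⟩ := by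
  set u := gidx a b v (len a b v - 1) with hu
  have hgu : grel a b v u := grel_gidx a b v _
  have hlenu : len a b u = len a b v := len_congr a b (grel_symm a b hgu)
  have hposu : pos a b u = len a b v - 1 := by
    rw [hu, pos_gidx, Nat.mod_eq_of_lt (by have := len_pos a b v; omega)]
  have hlast : pos a b u = len a b u - 1 := by rw [hposu, hlenu]
  have hnxtu : nxt a b u = v := by
    rw [nxt_last a b u hlast, ← grt_congr a b hgu, ← hv]
  have hgrtu : grt a b u = grt a b v := grt_congr a b (grel_symm a b hgu)
  have hB := claimB a b w u
  have hA' := claimA' a b w u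
  rw [hnxtu, hB] at hA'
  have hOgrtu : OS ⟨grt a b u, ⟨0, bs_pos a b w _⟩⟩ = OS ⟨v, ⟨0, bs_pos a b w v⟩⟩ := by
    have h1 : OS ⟨grt a b u, ⟨0, bs_pos a b w _⟩⟩ = OS ⟨grt a b v, ⟨0, bs_pos a b w _⟩⟩ :=
      congrArg (fun x => OS ⟨x, ⟨0, bs_pos a b w x⟩⟩) hgrtu
    rw [h1]
    exact (congrArg (fun x => OS ⟨x, ⟨0, bs_pos a b w x⟩⟩) hv).symm
  rw [hOgrtu] at hA'
  have htel := key_tel2 a b w u hlast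
  rw [hnxtu] at htel
  have hgwv : gw a b w v = 1 := gw_grt a b w v hv
  rw [hgwv, mul_one] at htel
  have hholu : holE a b w u = holE a b w v := holE_congr a b w (grel_symm a b hgu)
  rw [hholu] at htel
  have e : OS ⟨v, ⟨0, bs_pos a b w v⟩⟩ =
      (PS a b w (holE a b w v))⁻¹ * OS ⟨v, ⟨0, bs_pos a b w v⟩⟩ * PS a b w (holE a b w v) := by
    calc OS ⟨v, ⟨0, bs_pos a b w v⟩⟩
        = (PS a b w (hW a b w u))⁻¹ *
            ((PS a b w (gw a b w u))⁻¹ * OS ⟨v, ⟨0, bs_pos a b w v⟩⟩ * PS a b w (gw a b w u)) *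
            PS a b w (hW a b w u) := hA'
      _ = (PS a b w (gw a b w u) * PS a b w (hW a b w u))⁻¹ * OS ⟨v, ⟨0, bs_pos a b w v⟩⟩ *
            (PS a b w (gw a b w u) * PS a b w (hW a b w u)) := by group
      _ = (PS a b w (holE a b w v))⁻¹ * OS ⟨v, ⟨0, bs_pos a b w v⟩⟩ *
            PS a b w (holE a b w v) := by rw [← map_mul, htel]
  calc OS ⟨v, ⟨0, bs_pos a b w v⟩⟩ * PS a b w (holE a b w v)
      = PS a b w (holE a b w v) *
          ((PS a b w (holE a b w v))⁻¹ * OS ⟨v, ⟨0, bs_pos a b w v⟩⟩ *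
            PS a b w (holE a b w v)) := by group
    _ = PS a b w (holE a b w v) * OS ⟨v, ⟨0, bs_pos a b w v⟩⟩ := by rw [← e]

end Claims

section Final
variable {n s : ℕ} (a b : Fin s → Fin n) (w : Fin s → FreeGroup (Fin n))

local notation "MR" => PresentedGroup.mk (wirtingerRels' a b w)
local notation "MS" => PresentedGroup.mk (gaussSet (sigZ a b w) (tz a b w) (ez a b w))

noncomputable def psiZ : FreeGroup (Fin n) →* FreeGroup (ZT a b w) :=
  FreeGroup.lift (fun v => FreeGroup.of (⟨v, ⟨0, bs_pos a b w v⟩⟩ : ZT a b w))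

noncomputable def phiZ : FreeGroup (ZT a b w) →* FreeGroup (Fin n) :=
  FreeGroup.lift (fun z => (pre a b w z.1 (z.2 : ℕ))⁻¹ * FreeGroup.of z.1 * pre a b w z.1 (z.2 : ℕ))

lemma phiZ_of (z : ZT a b w) :
    phiZ a b w (FreeGroup.of z) =
      (pre a b w z.1 (z.2 : ℕ))⁻¹ * FreeGroup.of z.1 * pre a b w z.1 (z.2 : ℕ) :=
  FreeGroup.lift_apply_of

lemma MS_psiZ (x : FreeGroup (Fin n)) : MS (psiZ a b w x) = PS a b w x := by
  have : (PresentedGroup.mk (gaussSet (sigZ a b w) (tz a b w) (ez a b w))).comp (psiZ a b w)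
      = PS a b w := by
    apply FreeGroup.ext_hom
    intro v
    show MS (psiZ a b w (FreeGroup.of v)) = PS a b w (FreeGroup.of v)
    rw [PS_of]
    unfold psiZ
    rw [FreeGroup.lift_apply_of]
    rfl
  exact congrArg (fun f => f x) (congrArg DFunLike.coe this)

-- h1 : images of Wirtinger relators die in the Gauss group
lemma h1core
    (heuler : ∀ i : Fin n,
      Nat.card { p : Fin s // grel a b i (a p) } ≤ Nat.card { j : Fin n // grel a b i j })
    (q : Fin s) :
    PS a b w (FreeGroup.of (a q)) =
      (PS a b w (w q))⁻¹ * PS a b w (FreeGroup.of (b q)) * PS a b w (w q) := by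
  have hv : grt a b (a q) = grt a b (grt a b (a q)) := (grt_grt a b (a q)).symm
  have hgb : grt a b (b q) = grt a b (a q) := (grt_congr a b (grel_ab a b q)).symm
  have hBa := claimB a b w (a q)
  have hBb := claimB a b w (b q)
  dsimp only at hBa hBb
  have hOb : (PresentedGroup.of (rels := gaussSet (sigZ a b w) (tz a b w) (ez a b w))
        (⟨grt a b (b q), ⟨0, bs_pos a b w _⟩⟩ : ZT a b w)) =
      PresentedGroup.of ⟨grt a b (a q), ⟨0, bs_pos a b w _⟩⟩ :=
    congrArg (fun u => PresentedGroup.of (⟨u, ⟨0, bs_pos a b w u⟩⟩ : ZT a b w)) hgb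
  rw [hOb] at hBb
  have hcomm : Commute (PresentedGroup.of (⟨grt a b (a q), ⟨0, bs_pos a b w _⟩⟩ : ZT a b w))
      (PS a b w (hword a b w q)) := by
    apply comm_of_mem_closure (PS a b w) _ _ (hword_mem a b w heuler q)
    intro t ht
    rcases ht with rfl | ht
    · rw [PS_of]
    · have ht' : t = holE a b w (a q) := ht
      rw [ht']
      have hhol : holE a b w (a q) = holE a b w (grt a b (a q)) :=
        holE_congr a b w (grel_grt a b (a q))
      rw [hhol]
      exact claimC a b w (grt a b (a q)) hv
  have hc1 := hcomm.eq
  have hw : PS a b w (hword a b w q) = PS a b w (gw a b w (b q)) * PS a b w (w q) *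
      (PS a b w (gw a b w (a q)))⁻¹ := by
    unfold hword
    simp only [map_mul, map_inv]
  rw [hw] at hc1
  rw [PS_of a b w (a q), PS_of a b w (b q)]
  dsimp only
  rw [hBa, hBb]
  calc (PS a b w (gw a b w (a q)))⁻¹ *
        PresentedGroup.of ⟨grt a b (a q), ⟨0, bs_pos a b w _⟩⟩ * PS a b w (gw a b w (a q))
      = (PS a b w (w q))⁻¹ * (PS a b w (gw a b w (b q)))⁻¹ *
          (PS a b w (gw a b w (b q)) * PS a b w (w q) * (PS a b w (gw a b w (a q)))⁻¹ *
            PresentedGroup.of ⟨grt a b (a q), ⟨0, bs_pos a b w _⟩⟩) *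
          PS a b w (gw a b w (a q)) := by group
    _ = (PS a b w (w q))⁻¹ * (PS a b w (gw a b w (b q)))⁻¹ *
          (PresentedGroup.of ⟨grt a b (a q), ⟨0, bs_pos a b w _⟩⟩ *
            (PS a b w (gw a b w (b q)) * PS a b w (w q) * (PS a b w (gw a b w (a q)))⁻¹)) *
          PS a b w (gw a b w (a q)) := by rw [← hc1]
    _ = (PS a b w (w q))⁻¹ *
          ((PS a b w (gw a b w (b q)))⁻¹ *
            PresentedGroup.of ⟨grt a b (a q), ⟨0, bs_pos a b w _⟩⟩ *
            PS a b w (gw a b w (b q))) * PS a b w (w q) := by group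

lemma h1final
    (heuler : ∀ i : Fin n,
      Nat.card { p : Fin s // grel a b i (a p) } ≤ Nat.card { j : Fin n // grel a b i j }) :
    ∀ r ∈ wirtingerRels' a b w, MS (psiZ a b w r) = 1 := by
  rintro r ⟨q, rfl⟩
  rw [MS_psiZ]
  simp only [map_mul, map_inv]
  rw [h1core a b w heuler q]
  group

-- closing lemma on the Wirtinger side
lemma CL (v : Fin n) :
    (PresentedGroup.of (rels := wirtingerRels' a b w) (nxt a b v)) =
      (MR (hW a b w v))⁻¹ * PresentedGroup.of v * MR (hW a b w v) := by
  have hXv := X_eq a b w v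
  have hXn := X_eq a b w (nxt a b v)
  dsimp only at hXv hXn
  have hgn : grt a b (nxt a b v) = grt a b v := (grt_congr a b (grel_nxt a b v)).symm
  have hOn : (PresentedGroup.of (rels := wirtingerRels' a b w) (grt a b (nxt a b v))) =
      PresentedGroup.of (grt a b v) := congrArg _ hgn
  rw [hOn] at hXn
  by_cases hlast : pos a b v = len a b v - 1
  · have htel := key_tel2 a b w v hlast
    have hnx : nxt a b v = grt a b v := nxt_last a b v hlast
    have hggrt : gw a b w (nxt a b v) = 1 := by
      rw [hnx]
      exact gw_grt a b w _ (grt_grt a b v).symm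
    rw [hggrt, mul_one] at htel
    have hcomm := Xr_comm a b w v
    dsimp only at hcomm
    have hXnv : (PresentedGroup.of (rels := wirtingerRels' a b w) (nxt a b v)) =
        PresentedGroup.of (rels := wirtingerRels' a b w) (grt a b v) := congrArg _ hnx
    rw [hXnv, hXv]
    have hps : MR (gw a b w v) * MR (hW a b w v) = MR (holE a b w v) := by
      rw [← map_mul, htel]
    calc (PresentedGroup.of (rels := wirtingerRels' a b w) (grt a b v))
        = (MR (holE a b w v))⁻¹ * (MR (holE a b w v) *
            PresentedGroup.of (rels := wirtingerRels' a b w) (grt a b v)) := by group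
      _ = (MR (holE a b w v))⁻¹ *
            (PresentedGroup.of (rels := wirtingerRels' a b w) (grt a b v) *
              MR (holE a b w v)) := by rw [← hcomm]
      _ = (MR (holE a b w v))⁻¹ *
            PresentedGroup.of (rels := wirtingerRels' a b w) (grt a b v) *
            MR (holE a b w v) := by group
      _ = (MR (gw a b w v) * MR (hW a b w v))⁻¹ *
            PresentedGroup.of (rels := wirtingerRels' a b w) (grt a b v) *
            (MR (gw a b w v) * MR (hW a b w v)) := by rw [hps]
      _ = (MR (hW a b w v))⁻¹ *
            ((MR (gw a b w v))⁻¹ *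
              PresentedGroup.of (rels := wirtingerRels' a b w) (grt a b v) *
              MR (gw a b w v)) * MR (hW a b w v) := by group
  · have htel := key_tel1 a b w v hlast
    have hps : MR (gw a b w v) * MR (hW a b w v) = MR (gw a b w (nxt a b v)) := by
      rw [← map_mul, htel]
    rw [hXn, hXv, ← hps]
    group

lemma h2final : ∀ r ∈ gaussSet (sigZ a b w) (tz a b w) (ez a b w), MR (phiZ a b w r) = 1 := by
  rintro r ⟨z, rfl⟩
  obtain ⟨v, j⟩ := z
  by_cases hchain : (j : ℕ) + 1 < bs a b w v
  · have hjL : (j : ℕ) < (hW a b w v).toWord.length := by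
      have hb : bs a b w v = max 1 (hW a b w v).toWord.length := rfl
      omega
    have hsig : sigZ a b w ⟨v, j⟩ = ⟨v, ⟨(j : ℕ) + 1, hchain⟩⟩ := by
      unfold sigZ
      dsimp only [Equiv.coe_fn_mk]
      rw [dif_pos hchain]
    have ht : tz a b w ⟨v, j⟩ =
        ⟨((hW a b w v).toWord.get ⟨(j : ℕ), hjL⟩).1, ⟨0, bs_pos a b w _⟩⟩ := by
      unfold tz
      rw [dif_pos hjL]
    have he : ez a b w ⟨v, j⟩ =
        (if ((hW a b w v).toWord.get ⟨(j : ℕ), hjL⟩).2 then 1 else -1) := by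
      unfold ez
      rw [dif_pos hjL]
    rw [hsig, ht, he]
    simp only [map_mul, map_inv, map_zpow, phiZ_of]
    rw [pre_succ a b w v (j : ℕ) hjL, mk_single]
    simp only [pre_zero, map_mul, map_inv, map_zpow, map_one, inv_one, one_mul, mul_one]
    group
  · have hsig : sigZ a b w ⟨v, j⟩ = ⟨nxt a b v, ⟨0, bs_pos a b w _⟩⟩ := by
      unfold sigZ
      dsimp only [Equiv.coe_fn_mk]
      rw [dif_neg hchain]
    have hCL := CL a b w v
    by_cases hL : (hW a b w v).toWord.length = 0
    · have hj0 : (j : ℕ) = 0 := by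
        have hb : bs a b w v = max 1 (hW a b w v).toWord.length := rfl
        have := j.isLt
        omega
      have ht : tz a b w ⟨v, j⟩ = ⟨v, j⟩ := by
        unfold tz
        rw [dif_neg (by omega : ¬ ((j : ℕ) < (hW a b w v).toWord.length))]
      have he : ez a b w ⟨v, j⟩ = 1 := by
        unfold ez
        rw [dif_neg (by omega : ¬ ((j : ℕ) < (hW a b w v).toWord.length))]
      have hone : hW a b w v = 1 := hW_eq_one_of_len a b w hL
      rw [hone, map_one] at hCL
      rw [hsig, ht, he]
      simp only [map_mul, map_inv, map_zpow, phiZ_of]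
      rw [hj0]
      simp only [pre_zero, map_mul, map_inv, map_zpow, map_one, inv_one, one_mul, mul_one]
      have hCL' : MR (FreeGroup.of (nxt a b v)) = MR (FreeGroup.of v) := by
        have h9 : (PresentedGroup.of (rels := wirtingerRels' a b w) (nxt a b v)) =
            PresentedGroup.of v := by rw [hCL]; group
        exact h9
      rw [hCL']
      group
    · have hjL : (j : ℕ) < (hW a b w v).toWord.length := by
        have hb : bs a b w v = max 1 (hW a b w v).toWord.length := rfl
        have := j.isLt
        omega
      have hjlast : (j : ℕ) = (hW a b w v).toWord.length - 1 := by
        have hb : bs a b w v = max 1 (hW a b w v).toWord.length := rfl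
        have := j.isLt
        omega
      have ht : tz a b w ⟨v, j⟩ =
          ⟨((hW a b w v).toWord.get ⟨(j : ℕ), hjL⟩).1, ⟨0, bs_pos a b w _⟩⟩ := by
        unfold tz
        rw [dif_pos hjL]
      have he : ez a b w ⟨v, j⟩ =
          (if ((hW a b w v).toWord.get ⟨(j : ℕ), hjL⟩).2 then 1 else -1) := by
        unfold ez
        rw [dif_pos hjL]
      have hfull : pre a b w v (j : ℕ) *
          FreeGroup.mk [(hW a b w v).toWord.get ⟨(j : ℕ), hjL⟩] = hW a b w v := by
        rw [← pre_succ a b w v (j : ℕ) hjL]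
        rw [show (j : ℕ) + 1 = (hW a b w v).toWord.length by omega]
        exact pre_full a b w v
      have hps : MR (hW a b w v) = MR (pre a b w v (j : ℕ)) *
          MR (FreeGroup.mk [(hW a b w v).toWord.get ⟨(j : ℕ), hjL⟩]) := by
        rw [← map_mul, hfull]
      rw [hps] at hCL
      simp only [mk_single, map_zpow] at hCL
      have hCL' : MR (FreeGroup.of (nxt a b v)) =
          (MR (pre a b w v (j : ℕ)) *
              (MR (FreeGroup.of ((hW a b w v).toWord.get ⟨(j : ℕ), hjL⟩).1)) ^
                (if ((hW a b w v).toWord.get ⟨(j : ℕ), hjL⟩).2 then (1 : ℤ) else -1))⁻¹ *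
            MR (FreeGroup.of v) *
            (MR (pre a b w v (j : ℕ)) *
              (MR (FreeGroup.of ((hW a b w v).toWord.get ⟨(j : ℕ), hjL⟩).1)) ^
                (if ((hW a b w v).toWord.get ⟨(j : ℕ), hjL⟩).2 then (1 : ℤ) else -1)) := hCL
      rw [hsig, ht, he]
      simp only [map_mul, map_inv, map_zpow, phiZ_of]
      simp only [pre_zero, map_mul, map_inv, map_zpow, map_one, inv_one, one_mul, mul_one]
      rw [hCL']
      group

lemma h3final (x : Fin n) :
    MR (phiZ a b w (psiZ a b w (FreeGroup.of x))) = PresentedGroup.of x := by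
  unfold psiZ
  rw [FreeGroup.lift_apply_of, phiZ_of]
  dsimp only
  rw [pre_zero]
  simp only [map_mul, map_inv, inv_one, one_mul, mul_one]
  rfl

lemma h4final (z : ZT a b w) :
    MS (psiZ a b w (phiZ a b w (FreeGroup.of z))) = PresentedGroup.of z := by
  obtain ⟨v, j⟩ := z
  rw [phiZ_of, MS_psiZ]
  simp only [map_mul, map_inv]
  rw [PS_of]
  have hA := claimA a b w v (j : ℕ) j.isLt
  dsimp only at hA ⊢
  rw [show (⟨v, ⟨(j : ℕ), j.isLt⟩⟩ : ZT a b w) = ⟨v, j⟩ from by simp] at hA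
  rw [← hA]

end Final

theorem gaussSet_image {Z W : Type*} (e : Z ≃ W) (σ : Equiv.Perm Z) (t : Z → Z) (ε : Z → ℤ) :
    FreeGroup.freeGroupCongr e '' gaussSet σ t ε =
      gaussSet ((e.symm.trans σ).trans e) (fun x => e (t (e.symm x))) (fun x => ε (e.symm x)) := by
  ext r
  constructor
  · rintro ⟨r, ⟨q, rfl⟩, rfl⟩
    exact ⟨e q, by simp⟩
  · rintro ⟨q, rfl⟩
    refine ⟨_, ⟨e.symm q, rfl⟩, ?_⟩
    simp


theorem wirtinger_to_gauss_presentation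
    (n s : ℕ) (a b : Fin s → Fin n) (w : Fin s → FreeGroup (Fin n))
    (euler : ∀ i : Fin n,
      Nat.card { q : Fin s // Relation.EqvGen (wirtingerEdge n s a b) i (a q) } ≤
        Nat.card { j : Fin n // Relation.EqvGen (wirtingerEdge n s a b) i j }) :
    ∃ (m : ℕ) (σ : Equiv.Perm (Fin m)) (t : Fin m → Fin m) (ε : Fin m → ℤ),
      (∀ q : Fin m, ε q = 1 ∨ ε q = -1) ∧
      Nonempty (PresentedGroup (wirtingerRels n s a b w) ≃*
        PresentedGroup (gaussRels m σ t ε)) := by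
  have heuler : ∀ i : Fin n,
      Nat.card { p : Fin s // grel a b i (a p) } ≤ Nat.card { j : Fin n // grel a b i j } :=
    euler
  have iso1 : PresentedGroup (wirtingerRels' a b w) ≃*
      PresentedGroup (gaussSet (sigZ a b w) (tz a b w) (ez a b w)) :=
    tietze (psiZ a b w) (phiZ a b w) (h1final a b w heuler) (h2final a b w)
      (h3final a b w) (h4final a b w)
  set m := Fintype.card (ZT a b w) with hm
  set e : ZT a b w ≃ Fin m := Fintype.equivFin (ZT a b w) with he
  refine ⟨m, (e.symm.trans (sigZ a b w)).trans e,
    fun x => e (tz a b w (e.symm x)), fun x => ez a b w (e.symm x),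
    fun q => ez_pm a b w (e.symm q), ⟨?_⟩⟩
  have himg := gaussSet_image e (sigZ a b w) (tz a b w) (ez a b w)
  have hrels : gaussRels m ((e.symm.trans (sigZ a b w)).trans e)
      (fun x => e (tz a b w (e.symm x))) (fun x => ez a b w (e.symm x)) =
      gaussSet ((e.symm.trans (sigZ a b w)).trans e)
        (fun x => e (tz a b w (e.symm x))) (fun x => ez a b w (e.symm x)) := rfl
  rw [hrels, ← himg]
  have hR : wirtingerRels n s a b w = wirtingerRels' a b w := rfl
  rw [hR]
  exact iso1.trans (PresentedGroup.equivPresentedGroup _ e)
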